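/- Let V_− be a subspace of ℂ^{d1} ⊗ ℂ^{d2} containing no nonzero product vector, and let ε = sup{ ‖𝔄(Φ)‖²_op : Φ ∈ V_−, ‖Φ‖ = 1 } where 𝔄(Φ) is the coordinate matrix and ‖·‖_op the operator norm. Then ε < 1, and the Hermitian operator W = ε·I − P_{V_−} (P_{V_−} the orthogonal projection onto V_−) satisfies ⟨Ψ|W|Ψ⟩ ≥ 0 for every product vector Ψ = φ ⊗ χ, while ⟨Φ|W|Φ⟩ < 0 for any unit vector Φ ∈ V_−; i.e., W is an entanglement witness. -/

import Mathlib

/-! The overlap of `Φ` with a product vector is a matrix coefficient of its coordinate operator: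
`⟪φ ⊗ χ̄, Φ⟫ = ⟪φ, 𝔄(Φ) χ⟫`. By Cauchy–Schwarz, `‖𝔄(Φ)‖ ≤ ‖Φ‖`, and if `χ` attains `‖𝔄(Φ)‖ = ‖Φ‖`
then `Φ` is parallel to the product vector `𝔄(Φ)χ ⊗ χ̄`. So `‖𝔄(Φ)‖² < 1` on the compact unit
sphere of `V₋`, whence `ε < 1`. For a product vector `Ψ`, `‖PΨ‖ = |⟪u, Ψ⟫|` for the unit vector
`u ∈ V₋` along `PΨ`, and this is at most `‖𝔄(u)‖ ‖Ψ‖ ≤ √ε ‖Ψ‖`; hence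
`⟪Ψ, WΨ⟫ = ε ‖Ψ‖² - ‖PΨ‖² ≥ 0`, while for a unit `Φ ∈ V₋` it equals `ε - 1 < 0`. -/

open Matrix

/-- The coordinate matrix of a vector in `ℂ^{d1} ⊗ ℂ^{d2}`. -/
noncomputable def coordMat {d1 d2 : ℕ} (Ψ : EuclideanSpace ℂ (Fin d1 × Fin d2)) :
    Matrix (Fin d1) (Fin d2) ℂ :=
  Matrix.of fun i j => Ψ (i, j)

/-- The operator norm of a matrix (as an operator between Euclidean spaces), i.e. its
largest singular value. -/
noncomputable def opNorm {d1 d2 : ℕ} (M : Matrix (Fin d1) (Fin d2) ℂ) : ℝ :=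
  ‖LinearMap.toContinuousLinearMap (Matrix.toEuclideanLin M)‖

/-- The simple tensor `φ ⊗ χ` as a vector of `ℂ^{d1} ⊗ ℂ^{d2}`. -/
noncomputable def tensorVec {d1 d2 : ℕ} (φ : EuclideanSpace ℂ (Fin d1))
    (χ : EuclideanSpace ℂ (Fin d2)) : EuclideanSpace ℂ (Fin d1 × Fin d2) :=
  WithLp.toLp 2 (fun p : Fin d1 × Fin d2 => φ p.1 * χ p.2)

open RCLike Metric

theorem Real.sSup_image_lt_of_isCompact {β : Type*} [TopologicalSpace β] {f : β → ℝ}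
    {K : Set β} (hK : IsCompact K) (hf : ContinuousOn f K) {c : ℝ} (hc : 0 < c)
    (h : ∀ x ∈ K, f x < c) : sSup (f '' K) < c := by
  rcases K.eq_empty_or_nonempty with rfl | hne
  · -- `sSup ∅ = 0` in `ℝ`
    simpa using hc
  · exact (hK.sSup_lt_iff_of_continuous hne hf c).2 h

theorem ContinuousLinearMap.exists_norm_le_one_norm_apply_eq_opNorm {𝕜 E F : Type*}
    [DenselyNormedField 𝕜] [NormedAddCommGroup E] [NormedSpace 𝕜 E] [ProperSpace E]
    [SeminormedAddCommGroup F] [NormedSpace 𝕜 F] (f : E →L[𝕜] F) :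
    ∃ x, ‖x‖ ≤ 1 ∧ ‖f x‖ = ‖f‖ := by
  have hK : IsCompact ((fun x => ‖f x‖) '' closedBall 0 1) :=
    (isCompact_closedBall (0 : E) 1).image (continuous_norm.comp f.continuous)
  obtain ⟨x, hx, hmax⟩ := hK.sSup_mem ((nonempty_closedBall.2 zero_le_one).image _)
  exact ⟨x, mem_closedBall_zero_iff.1 hx, hmax.trans f.sSup_unitClosedBall_eq_norm⟩

theorem LinearMap.norm_apply_sq_le_of_forall_norm_eq_one {𝕜 E F : Type*} [RCLike 𝕜]
    [NormedAddCommGroup E] [NormedSpace 𝕜 E] [SeminormedAddCommGroup F] [NormedSpace 𝕜 F] (L : E →ₗ[𝕜] F)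
    {V : Submodule 𝕜 E} {c : ℝ} (h : ∀ u ∈ V, ‖u‖ = 1 → ‖L u‖ ^ 2 ≤ c) {u : E} (hu : u ∈ V) :
    ‖L u‖ ^ 2 ≤ c * ‖u‖ ^ 2 := by
  rcases eq_or_ne u 0 with rfl | hu0
  · simp
  have hunit := h _ (V.smul_mem (‖u‖⁻¹ : 𝕜) hu) (norm_smul_inv_norm hu0)
  rw [map_smul, norm_smul, norm_inv, norm_algebraMap', norm_norm, mul_pow, inv_pow] at hunit
  have hpos : 0 < ‖u‖ ^ 2 := by positivity
  rwa [inv_mul_le_iff₀ hpos, mul_comm] at hunit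

namespace Submodule

variable {𝕜 E : Type*} [RCLike 𝕜] [NormedAddCommGroup E] [InnerProductSpace 𝕜 E]
  (K : Submodule 𝕜 E) [K.HasOrthogonalProjection]

theorem re_inner_smul_sub_starProjection (c : ℝ) (v : E) :
    re (inner 𝕜 v (((c : 𝕜) • ContinuousLinearMap.id 𝕜 E - K.starProjection) v)) =
      c * ‖v‖ ^ 2 - ‖K.starProjection v‖ ^ 2 := by
  rw [_root_.sub_apply, inner_sub_right, map_sub, _root_.smul_apply,
    ContinuousLinearMap.id_apply, inner_smul_right, ← K.inner_starProjection_left_eq_right,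
    K.re_inner_starProjection_eq_normSq, inner_self_eq_norm_sq_to_K, starProjection_apply,
    norm_coe]
  norm_cast

theorem norm_starProjection_sq_le {c : ℝ} (hc : 0 ≤ c) {v : E}
    (h : ∀ u ∈ K, ‖inner 𝕜 u v‖ ^ 2 ≤ c * ‖u‖ ^ 2) : ‖K.starProjection v‖ ^ 2 ≤ c := by
  set p := K.starProjection v
  have hp : ‖p‖ ^ 2 ≤ ‖inner 𝕜 p v‖ :=
    (K.re_inner_starProjection_eq_normSq v).ge.trans (re_le_norm _)
  have hsq : (‖p‖ ^ 2) ^ 2 ≤ c * ‖p‖ ^ 2 :=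
    (pow_le_pow_left₀ (sq_nonneg _) hp 2).trans (h p (K.starProjection_apply_mem v))
  nlinarith [sq_nonneg ‖p‖]

end Submodule

section Tensor

variable {d d1 d2 : ℕ}

noncomputable def conjVec (χ : EuclideanSpace ℂ (Fin d)) : EuclideanSpace ℂ (Fin d) :=
  WithLp.toLp 2 (star χ.ofLp)

@[simp]
theorem conjVec_apply (χ : EuclideanSpace ℂ (Fin d)) (j : Fin d) : conjVec χ j = star (χ j) :=
  rfl

@[simp]
theorem conjVec_conjVec (χ : EuclideanSpace ℂ (Fin d)) : conjVec (conjVec χ) = χ := by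
  ext j; simp

@[simp]
theorem norm_conjVec (χ : EuclideanSpace ℂ (Fin d)) : ‖conjVec χ‖ = ‖χ‖ := by
  simp [EuclideanSpace.norm_eq]

theorem norm_tensorVec (φ : EuclideanSpace ℂ (Fin d1)) (χ : EuclideanSpace ℂ (Fin d2)) :
    ‖tensorVec φ χ‖ = ‖φ‖ * ‖χ‖ := by
  rw [EuclideanSpace.norm_eq, EuclideanSpace.norm_eq, EuclideanSpace.norm_eq, ← Real.sqrt_mul
    (Finset.sum_nonneg fun _ _ => sq_nonneg _), Finset.sum_mul_sum, ← Finset.univ_product_univ,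
    Finset.sum_product]
  simp [tensorVec, mul_pow]

theorem smul_tensorVec (r : ℂ) (φ : EuclideanSpace ℂ (Fin d1)) (χ : EuclideanSpace ℂ (Fin d2)) :
    r • tensorVec φ χ = tensorVec (r • φ) χ := by
  ext p; simp [tensorVec, mul_assoc]

noncomputable def coordOp (d1 d2 : ℕ) :
    EuclideanSpace ℂ (Fin d1 × Fin d2) →ₗ[ℂ]
      (EuclideanSpace ℂ (Fin d2) →L[ℂ] EuclideanSpace ℂ (Fin d1)) where
  toFun Φ := LinearMap.toContinuousLinearMap (Matrix.toEuclideanLin (coordMat Φ))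
  map_add' Φ Ψ := by rw [← map_add, ← map_add]; rfl
  map_smul' r Φ := by rw [← map_smul, ← map_smul]; rfl

theorem opNorm_coordMat (Φ : EuclideanSpace ℂ (Fin d1 × Fin d2)) :
    opNorm (coordMat Φ) = ‖coordOp d1 d2 Φ‖ :=
  rfl

theorem coordOp_apply (Φ : EuclideanSpace ℂ (Fin d1 × Fin d2)) (χ : EuclideanSpace ℂ (Fin d2))
    (i : Fin d1) : coordOp d1 d2 Φ χ i = ∑ j, Φ (i, j) * χ j :=
  rfl

theorem inner_tensorVec_conjVec (φ : EuclideanSpace ℂ (Fin d1)) (χ : EuclideanSpace ℂ (Fin d2))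
    (Φ : EuclideanSpace ℂ (Fin d1 × Fin d2)) :
    inner ℂ (tensorVec φ (conjVec χ)) Φ = inner ℂ φ (coordOp d1 d2 Φ χ) := by
  simp only [PiLp.inner_apply, RCLike.inner_apply, coordOp_apply, Fintype.sum_prod_type,
    Finset.sum_mul]
  refine Finset.sum_congr rfl fun i _ => Finset.sum_congr rfl fun j _ => ?_
  simp [tensorVec]
  ring

theorem norm_inner_tensorVec_le (φ : EuclideanSpace ℂ (Fin d1)) (χ : EuclideanSpace ℂ (Fin d2))
    (Φ : EuclideanSpace ℂ (Fin d1 × Fin d2)) :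
    ‖inner ℂ (tensorVec φ χ) Φ‖ ≤ ‖coordOp d1 d2 Φ‖ * ‖tensorVec φ χ‖ := by
  rw [← conjVec_conjVec χ, inner_tensorVec_conjVec, norm_tensorVec, norm_conjVec]
  calc _ ≤ ‖φ‖ * ‖coordOp d1 d2 Φ (conjVec χ)‖ := norm_inner_le_norm _ _
    _ ≤ ‖φ‖ * (‖coordOp d1 d2 Φ‖ * ‖conjVec χ‖) := by gcongr; exact (coordOp d1 d2 Φ).le_opNorm _
    _ = _ := by rw [norm_conjVec]; ring

theorem norm_coordOp_le (Φ : EuclideanSpace ℂ (Fin d1 × Fin d2)) :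
    ‖coordOp d1 d2 Φ‖ ≤ ‖Φ‖ := by
  refine ContinuousLinearMap.opNorm_le_bound _ (norm_nonneg Φ) fun χ => ?_
  set T := coordOp d1 d2 Φ
  have h : ‖T χ‖ ^ 2 ≤ ‖T χ‖ * (‖Φ‖ * ‖χ‖) := by
    calc ‖T χ‖ ^ 2 = ‖inner ℂ (tensorVec (T χ) (conjVec χ)) Φ‖ := by
          rw [inner_tensorVec_conjVec, inner_self_eq_norm_sq_to_K]; simp
      _ ≤ ‖tensorVec (T χ) (conjVec χ)‖ * ‖Φ‖ := norm_inner_le_norm _ _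
      _ = ‖T χ‖ * (‖Φ‖ * ‖χ‖) := by rw [norm_tensorVec, norm_conjVec]; ring
  nlinarith [mul_nonneg (norm_nonneg Φ) (norm_nonneg χ)]

theorem exists_eq_tensorVec_of_norm_coordOp_eq {Φ : EuclideanSpace ℂ (Fin d1 × Fin d2)}
    (h : ‖coordOp d1 d2 Φ‖ = ‖Φ‖) : ∃ φ χ, Φ = tensorVec φ χ := by
  set T := coordOp d1 d2 Φ
  obtain ⟨χ, hχ, hTχ⟩ := T.exists_norm_le_one_norm_apply_eq_opNorm
  set ψ := tensorVec (T χ) (conjVec χ)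
  have hinner : inner ℂ ψ Φ = (‖Φ‖ : ℂ) ^ 2 := by
    rw [inner_tensorVec_conjVec, inner_self_eq_norm_sq_to_K, hTχ, h]
    norm_cast
  have hψ : ‖ψ‖ ≤ ‖Φ‖ := by
    rw [norm_tensorVec, norm_conjVec, hTχ, h]
    exact mul_le_of_le_one_right (norm_nonneg _) hχ
  have hCS : ‖inner ℂ ψ Φ‖ = ‖ψ‖ * ‖Φ‖ := by
    refine le_antisymm (norm_inner_le_norm _ _) ?_
    rw [hinner, norm_pow, Complex.norm_real, norm_norm, sq]
    gcongr
  obtain ⟨r, hr⟩ : ∃ r : ℂ, Φ = r • ψ := by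
    rcases ((norm_inner_eq_norm_tfae ℂ ψ Φ).out 0 2).1 hCS with hψ0 | hr
    · exact ⟨0, by simpa [hψ0] using hinner.symm⟩
    · exact hr
  exact ⟨r • T χ, conjVec χ, by rw [hr, smul_tensorVec]⟩

theorem norm_coordOp_lt_norm {Φ : EuclideanSpace ℂ (Fin d1 × Fin d2)}
    (hΦ : ∀ φ χ, Φ ≠ tensorVec φ χ) : ‖coordOp d1 d2 Φ‖ < ‖Φ‖ :=
  (norm_coordOp_le Φ).lt_of_ne fun h =>
    let ⟨φ, χ, hφχ⟩ := exists_eq_tensorVec_of_norm_coordOp_eq h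
    hΦ φ χ hφχ

end Tensor

section ProductOverlap

variable {d1 d2 : ℕ} (V : Submodule ℂ (EuclideanSpace ℂ (Fin d1 × Fin d2)))

/-- The `ε` of the theorem: the largest squared Schmidt coefficient of a unit vector of `V`. -/
noncomputable def maxProductOverlap : ℝ :=
  sSup {x : ℝ | ∃ Φ ∈ V, ‖Φ‖ = 1 ∧ x = (opNorm (coordMat Φ)) ^ 2}

theorem maxProductOverlap_eq_sSup_image :
    maxProductOverlap V = sSup ((fun Φ => ‖coordOp d1 d2 Φ‖ ^ 2) '' (V ∩ sphere 0 1)) := by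
  unfold maxProductOverlap
  congr 1
  ext x
  simp [opNorm_coordMat, eq_comm, and_assoc]

theorem norm_coordOp_sq_le_maxProductOverlap_mul {Φ : EuclideanSpace ℂ (Fin d1 × Fin d2)}
    (hΦ : Φ ∈ V) : ‖coordOp d1 d2 Φ‖ ^ 2 ≤ maxProductOverlap V * ‖Φ‖ ^ 2 := by
  refine (coordOp d1 d2).norm_apply_sq_le_of_forall_norm_eq_one (fun Ψ hΨ hn => ?_) hΦ
  have hbdd : BddAbove {x : ℝ | ∃ Φ ∈ V, ‖Φ‖ = 1 ∧ x = (opNorm (coordMat Φ)) ^ 2} := by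
    refine ⟨1, fun x ⟨Φ, _, hn, hx⟩ => hx ▸ pow_le_one₀ (norm_nonneg _) ?_⟩
    exact (norm_coordOp_le Φ).trans_eq hn
  exact le_csSup hbdd ⟨Ψ, hΨ, hn, rfl⟩

theorem norm_starProjection_tensorVec_sq_le (φ : EuclideanSpace ℂ (Fin d1))
    (χ : EuclideanSpace ℂ (Fin d2)) :
    ‖V.starProjection (tensorVec φ χ)‖ ^ 2 ≤ maxProductOverlap V * ‖tensorVec φ χ‖ ^ 2 := by
  have hnonneg : 0 ≤ maxProductOverlap V :=
    Real.sSup_nonneg fun x ⟨_, _, _, hx⟩ => hx ▸ sq_nonneg _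
  refine V.norm_starProjection_sq_le (by positivity) fun u hu => ?_
  calc ‖inner ℂ u (tensorVec φ χ)‖ ^ 2
      ≤ ‖coordOp d1 d2 u‖ ^ 2 * ‖tensorVec φ χ‖ ^ 2 := by
        rw [norm_inner_symm, ← mul_pow]
        gcongr
        exact norm_inner_tensorVec_le φ χ u
    _ ≤ maxProductOverlap V * ‖u‖ ^ 2 * ‖tensorVec φ χ‖ ^ 2 := by
        gcongr
        exact norm_coordOp_sq_le_maxProductOverlap_mul V hu
    _ = maxProductOverlap V * ‖tensorVec φ χ‖ ^ 2 * ‖u‖ ^ 2 := by ring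

theorem maxProductOverlap_lt_one
    (hV : ∀ φ χ, tensorVec φ χ ∈ V → tensorVec φ χ = 0) : maxProductOverlap V < 1 := by
  rw [maxProductOverlap_eq_sSup_image]
  refine Real.sSup_image_lt_of_isCompact
    ((isCompact_sphere 0 1).inter_left V.closed_of_finiteDimensional)
    ((coordOp d1 d2).continuous_of_finiteDimensional.norm.pow 2).continuousOn one_pos ?_
  rintro Φ ⟨hΦ, hn⟩
  rw [mem_sphere_zero_iff_norm] at hn
  refine pow_lt_one₀ (norm_nonneg _) (hn ▸ norm_coordOp_lt_norm ?_) two_ne_zero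
  rintro φ χ rfl
  simp [hV φ χ hΦ] at hn

end ProductOverlap

/-- Let `V₋` contain no nonzero product vector and let
`ε = sup { ‖𝔄(Φ)‖²_op : Φ ∈ V₋, ‖Φ‖ = 1 }`. Then `ε < 1`, and `W = ε·I − P_{V₋}` is
nonnegative on product vectors but negative on unit vectors of `V₋`: an entanglement
witness. -/
theorem projection_witness (d1 d2 : ℕ)
    (Vm : Submodule ℂ (EuclideanSpace ℂ (Fin d1 × Fin d2)))
    (hVm : ∀ (φ : EuclideanSpace ℂ (Fin d1)) (χ : EuclideanSpace ℂ (Fin d2)),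
      tensorVec φ χ ∈ Vm → tensorVec φ χ = 0)
    (ε : ℝ)
    (hε : ε = sSup {x : ℝ | ∃ Φ ∈ Vm, ‖Φ‖ = 1 ∧ x = (opNorm (coordMat Φ)) ^ 2})
    (W : EuclideanSpace ℂ (Fin d1 × Fin d2) →L[ℂ] EuclideanSpace ℂ (Fin d1 × Fin d2))
    (hW : W = (ε : ℂ) • ContinuousLinearMap.id ℂ (EuclideanSpace ℂ (Fin d1 × Fin d2)) -
      Vm.subtypeL.comp (Vm.orthogonalProjection)) :
    ε < 1 ∧
    (∀ (φ : EuclideanSpace ℂ (Fin d1)) (χ : EuclideanSpace ℂ (Fin d2)),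
      0 ≤ (inner ℂ (tensorVec φ χ) (W (tensorVec φ χ)) : ℂ).re) ∧
    (∀ Φ ∈ Vm, ‖Φ‖ = 1 → (inner ℂ Φ (W Φ) : ℂ).re < 0) := by
  have hε1 : ε < 1 := by
    rw [hε]
    exact maxProductOverlap_lt_one Vm hVm
  have hquad : ∀ Ψ, (inner ℂ Ψ (W Ψ)).re = ε * ‖Ψ‖ ^ 2 - ‖Vm.starProjection Ψ‖ ^ 2 := by
    subst hW
    exact Vm.re_inner_smul_sub_starProjection ε
  refine ⟨hε1, fun φ χ => ?_, fun Φ hΦ hn => ?_⟩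
  · rw [hquad, sub_nonneg, hε]
    exact norm_starProjection_tensorVec_sq_le Vm φ χ
  · rw [hquad, Vm.starProjection_eq_self_iff.2 hΦ, hn]
    linarith
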